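/- Let u be a 2π-periodic C² function with amplitude V = max u − min u, v = u', and x₀ a maximum point of v with v(x₀) > 0 and Λv(x₀) > 0. Then (Hv(x₀))² ≤ (16/π)·V·Λv(x₀), where Hv is the Hilbert transform of v on ℝ. -/

import Mathlib

/-!
Write the truncated Hilbert integral as `∫_ε^{1/ε} (v(x₀ - t) - v(x₀ + t)) / t dt` and split it
at a radius `r`. Near `x₀`, since `x₀` maximises `v`,
`|v(x₀ - t) - v(x₀ + t)| ≤ (v(x₀) - v(x₀ - t)) + (v(x₀) - v(x₀ + t))`, and `1/t ≤ r/t²`, so this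
part is at most `r · π Λv(x₀)`. Away from `x₀`, `v(x₀ - t) - v(x₀ + t)` is the derivative of
`g(t) = max u + min u - u(x₀ + t) - u(x₀ - t)`, which satisfies `|g| ≤ V`; integrating by parts
against `1/t` bounds that part by `2V/r`. Thus `|Hv(x₀)| ≤ r Λv(x₀) + 2V/(π r)` for every `r > 0`,
and the optimal `r` gives `Hv(x₀)² ≤ (8/π) V Λv(x₀)`.
-/

open Real Set Filter Topology MeasureTheory

theorem Function.Periodic.deriv {𝕜 F : Type*} [NontriviallyNormedField 𝕜] [NormedAddCommGroup F]
    [NormedSpace 𝕜 F] {f : 𝕜 → F} {c : 𝕜} (h : Function.Periodic f c) :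
    Function.Periodic (deriv f) c := fun x => by
  rw [← deriv_comp_add_const, funext h]

theorem annulus_eq_union (c : ℝ) {a b : ℝ} (ha : 0 ≤ a) :
    {y : ℝ | a ≤ |c - y| ∧ |c - y| ≤ b} = Icc (c - b) (c - a) ∪ Icc (c + a) (c + b) := by
  ext y
  simp only [mem_ofPred_eq, mem_union, mem_Icc]
  rcases le_total y c with h | h
  · rw [abs_of_nonneg (sub_nonneg.2 h)]
    constructor
    · rintro ⟨h1, h2⟩; left; constructor <;> linarith
    · rintro (⟨h1, h2⟩ | ⟨h1, h2⟩) <;> constructor <;> linarith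
  · rw [abs_of_nonpos (sub_nonpos.2 h)]
    constructor
    · rintro ⟨h1, h2⟩; right; constructor <;> linarith
    · rintro (⟨h1, h2⟩ | ⟨h1, h2⟩) <;> constructor <;> linarith

theorem setIntegral_annulus {f : ℝ → ℝ} (c : ℝ) {a b : ℝ} (ha : 0 < a) (hab : a ≤ b)
    (hf : ContinuousOn f {y : ℝ | a ≤ |c - y| ∧ |c - y| ≤ b}) :
    ∫ y in {y : ℝ | a ≤ |c - y| ∧ |c - y| ≤ b}, f y = ∫ t in a..b, (f (c - t) + f (c + t)) := by
  rw [annulus_eq_union c ha.le] at hf ⊢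
  have hdisj : Disjoint (Icc (c - b) (c - a)) (Icc (c + a) (c + b)) :=
    Set.disjoint_left.2 fun y h₁ h₂ => by linarith [h₁.2, h₂.1]
  have hleft : IntervalIntegrable (fun t => f (c - t)) volume a b :=
    (hf.comp (by fun_prop) fun t ht => Or.inl ⟨by linarith [ht.2], by linarith [ht.1]⟩)
      |>.intervalIntegrable_of_Icc hab
  have hright : IntervalIntegrable (fun t => f (c + t)) volume a b :=
    (hf.comp (by fun_prop) fun t ht => Or.inr ⟨by linarith [ht.1], by linarith [ht.2]⟩)
      |>.intervalIntegrable_of_Icc hab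
  rw [setIntegral_union hdisj measurableSet_Icc (hf.mono subset_union_left).integrableOn_Icc
      (hf.mono subset_union_right).integrableOn_Icc,
    intervalIntegral.integral_add hleft hright,
    intervalIntegral.integral_comp_sub_left, intervalIntegral.integral_comp_add_left,
    intervalIntegral.integral_of_le (by linarith), intervalIntegral.integral_of_le (by linarith),
    integral_Icc_eq_integral_Ioc, integral_Icc_eq_integral_Ioc]

theorem integral_inv_sq {a b : ℝ} (ha : 0 < a) (hab : a ≤ b) :
    ∫ t in a..b, (t ^ 2)⁻¹ = a⁻¹ - b⁻¹ := by
  have hpos : ∀ t ∈ uIcc a b, t ≠ 0 := fun t ht => by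
    rw [uIcc_of_le hab] at ht; exact (ha.trans_le ht.1).ne'
  have hint : IntervalIntegrable (fun t : ℝ => (t ^ 2)⁻¹) volume a b :=
    (ContinuousOn.inv₀ (by fun_prop) fun t ht => pow_ne_zero 2 (hpos t ht)).intervalIntegrable
  rw [intervalIntegral.integral_eq_sub_of_hasDerivAt (f := fun t => -t⁻¹)
    (fun t ht => by simpa using (hasDerivAt_inv (hpos t ht)).fun_neg) hint]
  ring

theorem abs_integral_deriv_div_le {g g' : ℝ → ℝ} {a b M : ℝ} (ha : 0 < a) (hab : a ≤ b)
    (hg : ∀ t ∈ uIcc a b, HasDerivAt g (g' t) t) (hg' : IntervalIntegrable g' volume a b)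
    (hM : ∀ t ∈ uIcc a b, |g t| ≤ M) :
    |∫ t in a..b, g' t / t| ≤ 2 * M / a := by
  have hpos : ∀ t ∈ uIcc a b, 0 < t := fun t ht => by
    rw [uIcc_of_le hab] at ht; exact ha.trans_le ht.1
  have hcont : ContinuousOn g (uIcc a b) := fun t ht => (hg t ht).continuousAt.continuousWithinAt
  have hinv : ContinuousOn (fun t : ℝ => (t ^ 2)⁻¹) (uIcc a b) :=
    ContinuousOn.inv₀ (by fun_prop) fun t ht => (pow_pos (hpos t ht) 2).ne'
  have hibp := intervalIntegral.integral_mul_deriv_eq_deriv_mul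
    (fun t ht => hasDerivAt_inv (hpos t ht).ne') hg
    (hinv.neg.intervalIntegrable) hg'
  have hrest : |∫ t in a..b, -(t ^ 2)⁻¹ * g t| ≤ M * (a⁻¹ - b⁻¹) := by
    rw [← integral_inv_sq ha hab, ← intervalIntegral.integral_const_mul]
    refine intervalIntegral.abs_integral_le_integral_abs hab |>.trans <|
      intervalIntegral.integral_mono_on hab ((hinv.neg.mul hcont).abs.intervalIntegrable)
        (hinv.const_smul M).intervalIntegrable fun t ht => ?_
    rw [abs_mul, abs_neg, abs_of_pos (inv_pos.2 (pow_pos (ha.trans_le ht.1) 2)), mul_comm]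
    exact mul_le_mul_of_nonneg_right (hM t (by rwa [uIcc_of_le hab])) (by positivity)
  have hb : |b⁻¹ * g b| ≤ M * b⁻¹ := by
    rw [abs_mul, abs_of_pos (inv_pos.2 (ha.trans_le hab)), mul_comm]
    exact mul_le_mul_of_nonneg_right (hM b right_mem_uIcc) (inv_pos.2 (ha.trans_le hab)).le
  have ha' : |a⁻¹ * g a| ≤ M * a⁻¹ := by
    rw [abs_mul, abs_of_pos (inv_pos.2 ha), mul_comm]
    exact mul_le_mul_of_nonneg_right (hM a left_mem_uIcc) (by positivity)
  rw [intervalIntegral.integral_congr (g := fun t => t⁻¹ * g' t) fun t _ => div_eq_inv_mul _ _,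
    hibp]
  calc |b⁻¹ * g b - a⁻¹ * g a - ∫ t in a..b, -(t ^ 2)⁻¹ * g t|
      ≤ |b⁻¹ * g b| + |a⁻¹ * g a| + |∫ t in a..b, -(t ^ 2)⁻¹ * g t| :=
        (abs_sub _ _).trans (add_le_add_left (abs_sub _ _) _)
    _ ≤ M * b⁻¹ + M * a⁻¹ + M * (a⁻¹ - b⁻¹) := by gcongr
    _ = 2 * M / a := by ring

theorem integrableOn_div_sq_of_abs_le {f : ℝ → ℝ} {B ε : ℝ} (hf : AEStronglyMeasurable f)
    (hB : ∀ t, |f t| ≤ B) (hε : 0 < ε) :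
    IntegrableOn (fun t => f t / t ^ 2) {t : ℝ | ε ≤ |t|} := by
  -- `1 / t² ≤ (1 + ε⁻²) / (1 + t²)` on `|t| ≥ ε`, and `(1 + t²)⁻¹` is integrable.
  refine ((integrable_inv_one_add_sq.const_mul (B * (1 + (ε ^ 2)⁻¹))).integrableOn).mono'
    (hf.div₀ (continuous_pow 2).aestronglyMeasurable).restrict ?_
  rw [ae_restrict_iff' (measurableSet_le measurable_const continuous_abs.measurable)]
  refine Eventually.of_forall fun t ht => ?_
  have ht2 : ε ^ 2 ≤ t ^ 2 := by simpa only [sq_abs] using pow_le_pow_left₀ hε.le ht 2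
  have hB0 : 0 ≤ B := (abs_nonneg _).trans (hB 0)
  rw [Real.norm_eq_abs, abs_div, abs_of_nonneg (sq_nonneg t), ← div_eq_mul_inv]
  calc |f t| / t ^ 2 ≤ B / t ^ 2 := by gcongr; exact hB t
    _ ≤ B * (1 + (ε ^ 2)⁻¹) / (1 + t ^ 2) := by
      rw [div_le_div_iff₀ ((pow_pos hε 2).trans_le ht2) (by positivity)]
      have : 1 ≤ t ^ 2 * (ε ^ 2)⁻¹ := by
        rw [← div_eq_mul_inv, one_le_div (by positivity)]; exact ht2
      nlinarith

theorem Function.Periodic.integrableOn_sub_div_sq {v : ℝ → ℝ} {c : ℝ} (hper : Periodic v c)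
    (hc : c ≠ 0) (hv : Continuous v) (x₀ : ℝ) {ε : ℝ} (hε : 0 < ε) :
    IntegrableOn (fun t => (v x₀ - v (x₀ + t)) / t ^ 2) {t : ℝ | ε ≤ |t|} := by
  obtain ⟨B, hB⟩ := isBounded_iff_forall_norm_le.1 (hper.isBounded_of_continuous hc hv)
  exact integrableOn_div_sq_of_abs_le (by fun_prop : Continuous _).aestronglyMeasurable
    (fun t => (abs_sub _ _).trans (add_le_add (hB _ ⟨x₀, rfl⟩) (hB _ ⟨x₀ + t, rfl⟩))) hε

theorem sq_le_of_forall_abs_le_mul_add_div {h L c : ℝ} (hL : 0 < L) (hc : 0 ≤ c)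
    (hbound : ∀ r > 0, |h| ≤ r * L + c / r) : h ^ 2 ≤ 4 * L * c := by
  by_contra! hlt
  have hh : 0 < |h| := abs_pos.2 fun h0 => by nlinarith [h0 ▸ hlt]
  have := hbound (|h| / (2 * L)) (by positivity)
  have hfirst : |h| / (2 * L) * L = |h| / 2 := by field_simp
  have hsecond : c / (|h| / (2 * L)) < |h| / 2 := by
    rw [div_div_eq_mul_div, div_lt_iff₀ hh]
    nlinarith [sq_abs h]
  linarith

theorem abs_sub_div_le_mul_div_sq {p q m t r : ℝ} (hp : p ≤ m) (hq : q ≤ m) (ht : 0 < t)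
    (htr : t ≤ r) : |(p - q) / t| ≤ r * ((m - p + (m - q)) / t ^ 2) := by
  rw [abs_div, abs_of_pos ht, mul_div_assoc', div_le_div_iff₀ ht (by positivity)]
  have hpq : |p - q| ≤ m - p + (m - q) := abs_le.2 ⟨by linarith, by linarith⟩
  calc |p - q| * t ^ 2 = (|p - q| * t) * t := by ring
    _ ≤ ((m - p + (m - q)) * r) * t := by gcongr
    _ = r * (m - p + (m - q)) * t := by ring

section HilbertAtMaximum

variable {v : ℝ → ℝ} {x₀ : ℝ}

theorem setIntegral_hilbert_eq (hv : Continuous v) {a b : ℝ} (ha : 0 < a) (hab : a ≤ b) :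
    ∫ y in {y : ℝ | a ≤ |x₀ - y| ∧ |x₀ - y| ≤ b}, v y / (x₀ - y) =
      ∫ t in a..b, (v (x₀ - t) - v (x₀ + t)) / t := by
  rw [setIntegral_annulus x₀ ha hab]
  · refine intervalIntegral.integral_congr fun t _ => ?_
    simp only [sub_sub_cancel, sub_add_cancel_left, div_neg, sub_div]
    ring
  · refine hv.continuousOn.div (by fun_prop) fun y hy => ?_
    exact abs_pos.1 (ha.trans_le hy.1)

theorem abs_integral_near_le (hv : Continuous v) (hmax : ∀ x, v x ≤ v x₀) {ε r : ℝ}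
    (hε : 0 < ε) (hεr : ε ≤ r)
    (hΛ : IntegrableOn (fun t => (v x₀ - v (x₀ + t)) / t ^ 2) {t : ℝ | ε ≤ |t|}) :
    |∫ t in ε..r, (v (x₀ - t) - v (x₀ + t)) / t| ≤
      r * ∫ t in {t : ℝ | ε ≤ |t|}, (v x₀ - v (x₀ + t)) / t ^ 2 := by
  set Λ := fun t => (v x₀ - v (x₀ + t)) / t ^ 2
  set D := fun t => (v x₀ - v (x₀ - t) + (v x₀ - v (x₀ + t))) / t ^ 2
  have hne : ∀ t ∈ uIcc ε r, t ≠ 0 := fun t ht =>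
    (hε.trans_le (by rw [uIcc_of_le hεr] at ht; exact ht.1)).ne'
  have hD : ∫ t in ε..r, D t ≤ ∫ t in {t : ℝ | ε ≤ |t|}, Λ t := by
    have hannulus := setIntegral_annulus 0 hε hεr (f := Λ) <| by
      refine ContinuousOn.div (by fun_prop) (by fun_prop) fun t ht => pow_ne_zero 2 ?_
      exact abs_pos.1 (by simpa using hε.trans_le ht.1)
    simp only [Λ, zero_sub, zero_add, neg_sq, ← sub_eq_add_neg, ← add_div] at hannulus
    rw [← hannulus]
    exact setIntegral_mono_set hΛ (Eventually.of_forall fun t =>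
        div_nonneg (sub_nonneg.2 (hmax _)) (sq_nonneg t))
      (LE.le.eventuallyLE fun t ht => by simpa using ht.1)
  calc |∫ t in ε..r, (v (x₀ - t) - v (x₀ + t)) / t|
      ≤ ∫ t in ε..r, |(v (x₀ - t) - v (x₀ + t)) / t| :=
        intervalIntegral.abs_integral_le_integral_abs hεr
    _ ≤ ∫ t in ε..r, r * D t := by
      refine intervalIntegral.integral_mono_on hεr ?_ ?_ fun t ht =>
        abs_sub_div_le_mul_div_sq (hmax _) (hmax _) (hε.trans_le ht.1) ht.2
      · exact (ContinuousOn.div (by fun_prop) continuousOn_id hne).abs.intervalIntegrable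
      · exact (ContinuousOn.div (by fun_prop) (by fun_prop) fun t ht =>
          pow_ne_zero 2 (hne t ht)).const_smul r |>.intervalIntegrable
    _ ≤ r * ∫ t in {t : ℝ | ε ≤ |t|}, Λ t := by
      rw [intervalIntegral.integral_const_mul]
      exact mul_le_mul_of_nonneg_left hD (hε.le.trans hεr)

theorem abs_integral_far_le {u : ℝ → ℝ} {m M : ℝ} (hu : ∀ x, HasDerivAt u (v x) x)
    (hv : Continuous v) (hlb : ∀ x, m ≤ u x) (hub : ∀ x, u x ≤ M) {r R : ℝ} (hr : 0 < r)
    (hrR : r ≤ R) :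
    |∫ t in r..R, (v (x₀ - t) - v (x₀ + t)) / t| ≤ 2 * (M - m) / r := by
  refine abs_integral_deriv_div_le (g := fun t => M + m - u (x₀ + t) - u (x₀ - t)) hr hrR
    (fun t _ => ?_)
    ((by fun_prop : Continuous fun t => v (x₀ - t) - v (x₀ + t)).intervalIntegrable _ _)
    fun t _ => ?_
  · exact ((((hu (x₀ + t)).comp_const_add x₀ t).const_sub (M + m)).fun_sub
      ((hu (x₀ - t)).comp_const_sub x₀ t)).congr_deriv (by ring)
  · rw [abs_le]
    constructor <;> linarith [hlb (x₀ + t), hlb (x₀ - t), hub (x₀ + t), hub (x₀ - t)]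

theorem abs_setIntegral_hilbert_le {u : ℝ → ℝ} {m M ε r : ℝ} (hu : ∀ x, HasDerivAt u (v x) x)
    (hv : Continuous v) (hlb : ∀ x, m ≤ u x) (hub : ∀ x, u x ≤ M) (hmax : ∀ x, v x ≤ v x₀)
    (hΛ : IntegrableOn (fun t => (v x₀ - v (x₀ + t)) / t ^ 2) {t : ℝ | ε ≤ |t|})
    (hε : 0 < ε) (hεr : ε ≤ r) (hrε : r ≤ 1 / ε) :
    |∫ y in {y : ℝ | ε ≤ |x₀ - y| ∧ |x₀ - y| ≤ 1 / ε}, v y / (x₀ - y)| ≤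
      r * (∫ t in {t : ℝ | ε ≤ |t|}, (v x₀ - v (x₀ + t)) / t ^ 2) + 2 * (M - m) / r := by
  have hint : IntervalIntegrable (fun t => (v (x₀ - t) - v (x₀ + t)) / t) volume ε (1 / ε) := by
    refine ContinuousOn.intervalIntegrable (ContinuousOn.div (by fun_prop) continuousOn_id ?_)
    intro t ht
    rw [uIcc_of_le (hεr.trans hrε)] at ht
    exact (hε.trans_le ht.1).ne'
  have hr : r ∈ uIcc ε (1 / ε) := by rw [uIcc_of_le (hεr.trans hrε)]; exact ⟨hεr, hrε⟩
  rw [setIntegral_hilbert_eq hv hε (hεr.trans hrε),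
    ← intervalIntegral.integral_add_adjacent_intervals (hint.mono_set (uIcc_subset_uIcc_left hr))
      (hint.mono_set (uIcc_subset_uIcc_right hr))]
  exact (abs_add_le _ _).trans (add_le_add (abs_integral_near_le hv hmax hε hεr hΛ)
    (abs_integral_far_le hu hv hlb hub (hε.trans_le hεr) hrε))

end HilbertAtMaximum

theorem hilbert_transform_max_bound_general (u : ℝ → ℝ) (Mx mn V x₀ L H0 : ℝ)
    (hu : ContDiff ℝ 2 u) (hper : Function.Periodic u (2*π))
    (hMx : IsGreatest (Set.range u) Mx) (hmn : IsLeast (Set.range u) mn)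
    (hV : V = Mx - mn)
    (hmax : ∀ x : ℝ, deriv u x ≤ deriv u x₀)
    (hL : Filter.Tendsto (fun ε : ℝ =>
        (1/π) * ∫ y in {y : ℝ | ε ≤ |y|}, (deriv u x₀ - deriv u (x₀ + y)) / y^2)
        (𝓝[>] 0) (𝓝 L))
    (hLpos : 0 < L)
    (hH : Filter.Tendsto (fun ε : ℝ =>
        (1/π) * ∫ y in {y : ℝ | ε ≤ |x₀ - y| ∧ |x₀ - y| ≤ 1/ε}, deriv u y / (x₀ - y))
        (𝓝[>] 0) (𝓝 H0)) :
    H0^2 ≤ (16/π)*V*L := by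
  have hv : Continuous (deriv u) := hu.continuous_deriv one_le_two
  have hderiv : ∀ x, HasDerivAt u (deriv u x) x :=
    fun x => (hu.differentiable two_ne_zero x).hasDerivAt
  have hub : ∀ x, u x ≤ Mx := fun x => hMx.2 ⟨x, rfl⟩
  have hlb : ∀ x, mn ≤ u x := fun x => hmn.2 ⟨x, rfl⟩
  have hbound : ∀ r > 0, |H0| ≤ r * L + 2 * V / π / r := by
    intro r hr
    refine le_of_tendsto_of_tendsto hH.abs ((hL.const_mul r).add_const _) ?_
    filter_upwards [Ioo_mem_nhdsGT (lt_min hr (one_div_pos.2 hr))] with ε ⟨hε, hεr⟩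
    have hkey := abs_setIntegral_hilbert_le hderiv hv hlb hub hmax
      (hper.deriv.integrableOn_sub_div_sq (by positivity) hv x₀ hε) hε
      (hεr.le.trans (min_le_left _ _)) ((le_one_div hr hε).2 (hεr.le.trans (min_le_right _ _)))
    rw [abs_mul, abs_of_pos (one_div_pos.2 pi_pos), hV]
    calc _ ≤ 1 / π * (r * (∫ t in {t : ℝ | ε ≤ |t|}, (deriv u x₀ - deriv u (x₀ + t)) / t ^ 2)
          + 2 * (Mx - mn) / r) := by gcongr
      _ = _ := by ring
  have hV0 : 0 ≤ V := hV ▸ sub_nonneg.2 ((hlb 0).trans (hub 0))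
  calc H0 ^ 2 ≤ 4 * L * (2 * V / π) :=
        sq_le_of_forall_abs_le_mul_add_div hLpos (by positivity) hbound
    _ ≤ 16 / π * V * L := by
      rw [show 4 * L * (2 * V / π) = 8 / π * V * L by ring]
      gcongr
      norm_num

/-- Control of the Hilbert transform at a maximum of `v = u'`:
`(Hv(x₀))² ≤ (16/π)·V·Λv(x₀)`, where `V` is the amplitude of `u`. -/
theorem hilbert_transform_max_bound (u : ℝ → ℝ) (Mx mn V x₀ L H0 : ℝ)
    (hu : ContDiff ℝ 2 u) (hper : Function.Periodic u (2*π))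
    (hMx : IsGreatest (Set.range u) Mx) (hmn : IsLeast (Set.range u) mn)
    (hV : V = Mx - mn)
    (hmax : ∀ x : ℝ, deriv u x ≤ deriv u x₀)
    (hv0 : 0 < deriv u x₀)
    (hL : Filter.Tendsto (fun ε : ℝ =>
        (1/π) * ∫ y in {y : ℝ | ε ≤ |y|}, (deriv u x₀ - deriv u (x₀ + y)) / y^2)
        (𝓝[>] 0) (𝓝 L))
    (hLpos : 0 < L)
    (hH : Filter.Tendsto (fun ε : ℝ =>
        (1/π) * ∫ y in {y : ℝ | ε ≤ |x₀ - y| ∧ |x₀ - y| ≤ 1/ε}, deriv u y / (x₀ - y))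
        (𝓝[>] 0) (𝓝 H0)) :
    H0^2 ≤ (16/π)*V*L :=
  hilbert_transform_max_bound_general u Mx mn V x₀ L H0 hu hper hMx hmn hV hmax hL hLpos hH
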